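/- Let m = 2^ℓ + n with 0 ≤ n < 2^ℓ and set h = 1/2^ℓ. Then for p ≥ ℓ+2, M_{1,p} c_m = M_{h/4, p−(ℓ+2)} c_m − M_{h/4, p−(ℓ+2)} Q_{h/2} c_m − Σ_{j=0}^{ℓ} M_{1/2^{j+1}, p−(j+1)} Q_{1/2^j} c_{n mod 2^j}. -/
import Mathlib


open Real

/-- Gaussian. -/
noncomputable def psi (x : ℝ) : ℝ := (1 / Real.sqrt (2 * Real.pi)) * Real.exp (-x ^ 2 / 2)

/-- Gaussian quasi-interpolation at spacing `h`. -/
noncomputable def Q (h : ℝ) (f : ℝ → ℝ) : ℝ → ℝ :=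
  fun x => ∑' ℓ : ℤ, f (h * ℓ) * psi (x / h - ℓ)

/-- `c m x = cos(2πmx)`. -/
noncomputable def c (m : ℕ) (x : ℝ) : ℝ := Real.cos (2 * Real.pi * m * x)

/-- Multilevel error operator: `M h 0 = Id`,
`M h (p+1) f = M h p f − Q (h/2^p) (M h p f)`. -/
noncomputable def M (h : ℝ) : ℕ → (ℝ → ℝ) → (ℝ → ℝ)
  | 0, f => f
  | p + 1, f => M h p f - Q (h / 2 ^ p) (M h p f)

/-! Auxiliary lemmas -/

lemma key_ineq (t : ℝ) (x : ℝ) : |x| - (|t| + 1) ≤ (t - x) ^ 2 := by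
  nlinarith [sq_nonneg (|x| - |t| - 1), abs_nonneg x, abs_nonneg t, neg_abs_le t, le_abs_self t,
    neg_abs_le x, le_abs_self x, sq_nonneg (t - x), sq_abs x, sq_abs t, abs_mul_abs_self x,
    abs_mul_abs_self t, sq_nonneg (|x| - |t|)]

lemma summable_exp_abs : Summable (fun ℓ : ℤ => Real.exp (-|(ℓ : ℝ)| / 2)) := by
  have hnat : Summable (fun n : ℕ => Real.exp (-(n : ℝ) / 2)) := by
    have : (fun n : ℕ => Real.exp (-(n : ℝ) / 2)) = fun n : ℕ => (Real.exp (-1 / 2)) ^ n := by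
      funext n
      rw [← Real.exp_nat_mul]
      ring_nf
    rw [this]
    exact summable_geometric_of_lt_one (Real.exp_nonneg _) (Real.exp_lt_one_iff.mpr (by norm_num))
  apply Summable.of_nat_of_neg
  · simpa using hnat
  · simpa using hnat

lemma summable_psi (t : ℝ) : Summable (fun ℓ : ℤ => psi (t - ℓ)) := by
  apply Summable.of_nonneg_of_le
    (f := fun ℓ : ℤ => (1 / Real.sqrt (2 * Real.pi)) * (Real.exp ((|t| + 1) / 2) * Real.exp (-|(ℓ : ℝ)| / 2)))
  · intro ℓ
    exact mul_nonneg (by positivity) (Real.exp_nonneg _)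
  · intro ℓ
    unfold psi
    apply mul_le_mul_of_nonneg_left _ (by positivity)
    rw [← Real.exp_add]
    apply Real.exp_le_exp.mpr
    have := key_ineq t (ℓ : ℝ)
    linarith
  · exact (summable_exp_abs.mul_left _).mul_left _

lemma psi_nonneg (x : ℝ) : 0 ≤ psi x := by
  unfold psi; positivity

/-- Bounded functions. -/
def Bdd (f : ℝ → ℝ) : Prop := ∃ C : ℝ, ∀ x, |f x| ≤ C

lemma summable_Qterm {f : ℝ → ℝ} (hf : Bdd f) (h t : ℝ) :
    Summable (fun ℓ : ℤ => f (h * ℓ) * psi (t - ℓ)) := by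
  obtain ⟨C, hC⟩ := hf
  apply Summable.of_abs
  apply Summable.of_nonneg_of_le (f := fun ℓ : ℤ => C * psi (t - ℓ))
    (fun ℓ => abs_nonneg _)
  · intro ℓ
    rw [abs_mul, abs_of_nonneg (psi_nonneg _)]
    exact mul_le_mul_of_nonneg_right (hC _) (psi_nonneg _)
  · exact (summable_psi t).mul_left _

lemma tsum_psi_le (t : ℝ) :
    (∑' ℓ : ℤ, psi (t - ℓ)) ≤
      (1 / Real.sqrt (2 * Real.pi)) * Real.exp 1 * ∑' ℓ : ℤ, Real.exp (-|(ℓ : ℝ)| / 2) := by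
  set r : ℤ := ⌊t⌋ with hr
  have hre : (∑' ℓ : ℤ, psi (t - ℓ)) = ∑' j : ℤ, psi ((t - r) - j) := by
    rw [← (Equiv.addLeft r).tsum_eq (fun ℓ : ℤ => psi (t - ℓ))]
    apply tsum_congr
    intro j
    simp only [Equiv.coe_addLeft]
    congr 1
    push_cast
    ring
  rw [hre]
  have hs0 : (0 : ℝ) ≤ t - r := by
    have := Int.floor_le t; linarith
  have hs1 : t - r < 1 := by
    have := Int.lt_floor_add_one t; linarith
  rw [mul_assoc, ← tsum_mul_left, ← tsum_mul_left]
  apply Summable.tsum_le_tsum _ (summable_psi _) (((summable_exp_abs.mul_left _).mul_left _))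
  intro j
  unfold psi
  apply mul_le_mul_of_nonneg_left _ (by positivity)
  rw [← Real.exp_add]
  apply Real.exp_le_exp.mpr
  have h1 := key_ineq (t - r) (j : ℝ)
  have h2 : |t - (r : ℝ)| ≤ 1 := by
    rw [abs_of_nonneg hs0]; linarith
  linarith

lemma Bdd_Q {f : ℝ → ℝ} (hf : Bdd f) (h : ℝ) : Bdd (Q h f) := by
  obtain ⟨C, hC⟩ := hf
  have hC0 : 0 ≤ C := le_trans (abs_nonneg _) (hC 0)
  refine ⟨C * ((1 / Real.sqrt (2 * Real.pi)) * Real.exp 1 * ∑' ℓ : ℤ, Real.exp (-|(ℓ : ℝ)| / 2)), ?_⟩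
  intro x
  unfold Q
  calc |∑' ℓ : ℤ, f (h * ℓ) * psi (x / h - ℓ)|
      ≤ ∑' ℓ : ℤ, |f (h * ℓ) * psi (x / h - ℓ)| := by
        have := norm_tsum_le_tsum_norm (f := fun ℓ : ℤ => f (h * ℓ) * psi (x / h - ℓ))
          (by simpa only [Real.norm_eq_abs] using (summable_Qterm ⟨C, hC⟩ h (x / h)).abs)
        simpa only [Real.norm_eq_abs] using this
    _ ≤ ∑' ℓ : ℤ, C * psi (x / h - ℓ) := by
        apply Summable.tsum_le_tsum _ ((summable_Qterm ⟨C, hC⟩ h (x/h)).abs) ((summable_psi _).mul_left _)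
        intro ℓ
        rw [abs_mul, abs_of_nonneg (psi_nonneg _)]
        exact mul_le_mul_of_nonneg_right (hC _) (psi_nonneg _)
    _ = C * ∑' ℓ : ℤ, psi (x / h - ℓ) := tsum_mul_left
    _ ≤ _ := mul_le_mul_of_nonneg_left (tsum_psi_le _) hC0

lemma Q_sub {f g : ℝ → ℝ} (hf : Bdd f) (hg : Bdd g) (h : ℝ) :
    Q h (f - g) = Q h f - Q h g := by
  funext x
  show ∑' ℓ : ℤ, (f - g) (h * ℓ) * psi (x / h - ℓ) = _
  have : ∀ ℓ : ℤ, (f - g) (h * ℓ) * psi (x / h - ℓ) =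
      f (h * ℓ) * psi (x / h - ℓ) - g (h * ℓ) * psi (x / h - ℓ) := by
    intro ℓ; simp [sub_mul]
  rw [tsum_congr this, Summable.tsum_sub (summable_Qterm hf h _) (summable_Qterm hg h _)]
  rfl

lemma Bdd_sub {f g : ℝ → ℝ} (hf : Bdd f) (hg : Bdd g) : Bdd (f - g) := by
  obtain ⟨C, hC⟩ := hf; obtain ⟨D, hD⟩ := hg
  refine ⟨C + D, fun x => ?_⟩
  calc |(f - g) x| = |f x - g x| := rfl
    _ ≤ |f x| + |g x| := abs_sub _ _
    _ ≤ C + D := add_le_add (hC x) (hD x)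

lemma Bdd_M {f : ℝ → ℝ} (hf : Bdd f) (h : ℝ) (p : ℕ) : Bdd (M h p f) := by
  induction p with
  | zero => exact hf
  | succ p ih => exact Bdd_sub ih (Bdd_Q ih _)

lemma M_sub {f g : ℝ → ℝ} (hf : Bdd f) (hg : Bdd g) (h : ℝ) (p : ℕ) :
    M h p (f - g) = M h p f - M h p g := by
  induction p with
  | zero => rfl
  | succ p ih =>
    show M h p (f - g) - Q (h / 2 ^ p) (M h p (f - g)) = _
    rw [ih, Q_sub (Bdd_M hf h p) (Bdd_M hg h p)]
    show _ = (M h p f - Q (h / 2 ^ p) (M h p f)) - (M h p g - Q (h / 2 ^ p) (M h p g))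
    abel

lemma M_peel (h : ℝ) (p : ℕ) (f : ℝ → ℝ) :
    M h (p + 1) f = M (h / 2) p (f - Q h f) := by
  induction p with
  | zero =>
    show f - Q (h / 2 ^ 0) f = f - Q h f
    norm_num
  | succ p ih =>
    show M h (p+1) f - Q (h / 2 ^ (p+1)) (M h (p+1) f) =
      M (h/2) p (f - Q h f) - Q ((h/2) / 2 ^ p) (M (h/2) p (f - Q h f))
    rw [ih]
    congr 2 <;> ring

lemma Q_alias (j m : ℕ) : Q (1 / 2 ^ j : ℝ) (c m) = Q (1 / 2 ^ j : ℝ) (c (m % 2 ^ j)) := by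
  funext x
  apply tsum_congr
  intro ℓ
  congr 1
  unfold c
  obtain ⟨q, hq⟩ : ∃ q, m = 2 ^ j * q + m % 2 ^ j := ⟨m / 2 ^ j, (Nat.div_add_mod m (2 ^ j)).symm⟩
  have h2 : (2 : ℝ) ^ j ≠ 0 := by positivity
  have key : 2 * Real.pi * m * (1 / 2 ^ j * ℓ) =
      2 * Real.pi * (m % 2 ^ j : ℕ) * (1 / 2 ^ j * ℓ) +
        (((q : ℤ) * ℓ : ℤ) : ℝ) * (2 * Real.pi) := by
    have hm : (m : ℝ) = 2 ^ j * q + (m % 2 ^ j : ℕ) := by exact_mod_cast congrArg (Nat.cast (R := ℝ)) hq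
    rw [hm]
    push_cast
    field_simp
    ring
  rw [key, Real.cos_add_int_mul_two_pi]

lemma Bdd_c (m : ℕ) : Bdd (c m) := ⟨1, fun x => by unfold c; exact Real.abs_cos_le_one _⟩

lemma claim (m : ℕ) (p k : ℕ) (hk : k ≤ p) :
    M 1 p (c m) = M (1 / 2 ^ k) (p - k) (c m) -
      ∑ j ∈ Finset.range k, M (1 / 2 ^ (j + 1)) (p - (j + 1)) (Q (1 / 2 ^ j) (c (m % 2 ^ j))) := by
  induction k with
  | zero => simp
  | succ k ih =>
    rw [ih (by omega)]
    have hpk : p - k = (p - (k + 1)) + 1 := by omega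
    have hMk : M (1 / 2 ^ k : ℝ) (p - k) (c m) =
        M (1 / 2 ^ (k + 1)) (p - (k + 1)) (c m) -
          M (1 / 2 ^ (k + 1)) (p - (k + 1)) (Q (1 / 2 ^ k) (c (m % 2 ^ k))) := by
      rw [hpk, M_peel]
      have h2 : (1 / 2 ^ k : ℝ) / 2 = 1 / 2 ^ (k + 1) := by ring
      rw [h2, Q_alias, M_sub (Bdd_c m) (Bdd_Q (Bdd_c _) _)]
    rw [hMk, Finset.sum_range_succ]
    abel

/-- For `m = 2^ℓ + n` with `0 ≤ n < 2^ℓ`, `h = 1/2^ℓ` and `p ≥ ℓ+2`,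
`M_{1,p} c_m = M_{h/4,p−(ℓ+2)} c_m − M_{h/4,p−(ℓ+2)} Q_{h/2} c_m
  − Σ_{j=0}^{ℓ} M_{1/2^{j+1},p−(j+1)} Q_{1/2^j} c_{n mod 2^j}`. -/
theorem multilevel_error_all_levels (l n : ℕ) (hn : n < 2 ^ l) (h : ℝ)
    (hh : h = 1 / 2 ^ l) (p : ℕ) (hp : l + 2 ≤ p) :
    M 1 p (c (2 ^ l + n)) =
      M (h / 4) (p - (l + 2)) (c (2 ^ l + n)) -
        M (h / 4) (p - (l + 2)) (Q (h / 2) (c (2 ^ l + n))) -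
        ∑ j ∈ Finset.range (l + 1),
          M (1 / 2 ^ (j + 1)) (p - (j + 1)) (Q (1 / 2 ^ j) (c (n % 2 ^ j))) := by
  rw [claim (2 ^ l + n) p (l + 1) (by omega)]
  have hsum : ∀ j ∈ Finset.range (l + 1),
      M (1 / 2 ^ (j + 1) : ℝ) (p - (j + 1)) (Q (1 / 2 ^ j) (c ((2 ^ l + n) % 2 ^ j))) =
      M (1 / 2 ^ (j + 1) : ℝ) (p - (j + 1)) (Q (1 / 2 ^ j) (c (n % 2 ^ j))) := by
    intro j hj
    have hjl : j ≤ l := by simpa using Nat.lt_succ_iff.mp (Finset.mem_range.mp hj)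
    have he : 2 ^ l + n = n + 2 ^ j * 2 ^ (l - j) := by
      have : 2 ^ j * 2 ^ (l - j) = 2 ^ l := by rw [← pow_add]; congr 1; omega
      omega
    rw [he, Nat.add_mul_mod_self_left]
  rw [Finset.sum_congr rfl hsum]
  have hq : p - (l + 1) = (p - (l + 2)) + 1 := by omega
  have h2 : (1 / 2 ^ (l + 1) : ℝ) / 2 = h / 4 := by rw [hh]; ring
  have h3 : (1 / 2 ^ (l + 1) : ℝ) = h / 2 := by rw [hh]; ring
  rw [hq, M_peel, h2, h3, M_sub (Bdd_c _) (Bdd_Q (Bdd_c _) _)]
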